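/- Let w⁺, w⁻, n⁺, n⁻ ∈ ℝ³ satisfy w⁺·n⁺ + w⁻·n⁻ = 0, let u⁺, u⁻ ∈ ℝ, and let α ≥ 0. Define the edge dissipation B_e := -(1/2){w,n}[[u²]] + ({uw,n} + (α/2)[[u]])[[u]]. Then B_e = (α/2)[[u]]² ≥ 0. -/

import Mathlib

/-! Since `w⁺·n⁺ = -w⁻·n⁻`, the normal flux `{w,n}` equals `w⁺·n⁺` and `{uw,n} = (w⁺·n⁺)(u⁺ + u⁻)/2`,
so the convective terms `-(1/2){w,n}[[u²]]` and `{uw,n}[[u]]` cancel by `[[u²]] = (u⁺ + u⁻)[[u]]`,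
leaving only the penalty `(α/2)[[u]]²`. -/

theorem edge_dissipation_eq_of_add_eq_zero {K : Type*} [Field K] [NeZero (2 : K)] {a b : K}
    (hab : a + b = 0) (up um α : K) :
    -(1 / 2) * ((a - b) / 2) * (up ^ 2 - um ^ 2) + ((up * a - um * b) / 2 + α / 2 * (up - um)) *
      (up - um) = α / 2 * (up - um) ^ 2 := by
  obtain rfl : b = -a := eq_neg_of_add_eq_zero_right hab
  field_simp
  ring

/-- Edge dissipation in the L²-stability proof: B_e = (α/2)[[u]]² ≥ 0. -/
theorem stmt_3 (wp wm np nm : Fin 3 → ℝ)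
    (h : (∑ i, wp i * np i) + (∑ i, wm i * nm i) = 0)
    (up um α : ℝ) (hα : 0 ≤ α) :
    -(1 / 2) * (((∑ i, wp i * np i) - (∑ i, wm i * nm i)) / 2) * (up ^ 2 - um ^ 2)
        + ((((∑ i, (up * wp i) * np i) - (∑ i, (um * wm i) * nm i)) / 2)
            + (α / 2) * (up - um)) * (up - um)
      = (α / 2) * (up - um) ^ 2 ∧
    0 ≤ (α / 2) * (up - um) ^ 2 := by
  have sum_const_mul (c : ℝ) (w n : Fin 3 → ℝ) : ∑ i, (c * w i) * n i = c * ∑ i, w i * n i := by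
    simp only [mul_assoc, Finset.mul_sum]
  rw [sum_const_mul up, sum_const_mul um]
  exact ⟨edge_dissipation_eq_of_add_eq_zero h up um α, by positivity⟩
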